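/- arXiv:2412.12372 — 2 statements merged into one kernel-verified Lean document; each statement's English description precedes it below -/
import Mathlib

section
/- Let m be a positive integer, a > 0, and let f : ℝ → ℝ₊ be an even function, concave on its support [-a, a], with 0 < ∫ f < +∞. Then P_m(f) = ∫_ℝ f(x)^m dx · ∫_ℝ (Lf(y))^m dy ≥ 4/(m+1). -/
open MeasureTheory Set Filter

lemma pow_succ_bound (k : ℕ) {s c : ℝ} (hs : 0 ≤ s) (hc : 0 ≤ c) :
    s ^ (k+1) + ((k:ℝ)+1) * s ^ k * c ≤ (s + c) ^ (k+1) := by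
  induction k with
  | zero => simp
  | succ k ih =>
      have h2 : (s + c) * (s ^ (k+1) + ((k:ℝ)+1) * s ^ k * c) ≤ (s + c) * (s + c) ^ (k+1) :=
        mul_le_mul_of_nonneg_left ih (by linarith)
      have h5 : (s + c) * (s ^ (k+1) + ((k:ℝ)+1) * s ^ k * c)
          = s^(k+1+1) + ((k:ℝ)+1+1)*s^(k+1)*c + (((k:ℝ)+1)*(s^k*(c*c))) := by ring
      have h6 : 0 ≤ ((k:ℝ)+1)*(s^k*(c*c)) := by positivity
      have h7 : (s + c) ^ (k+1+1) = (s + c) * (s + c) ^ (k+1) := by ring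
      push_cast
      nlinarith

lemma integrableOn_Ioc_of_bound {g : ℝ → ℝ} (hg : Measurable g) (u v C : ℝ)
    (hC : ∀ x ∈ Set.Ioc u v, |g x| ≤ C) :
    IntegrableOn g (Set.Ioc u v) := by
  refine ⟨hg.aestronglyMeasurable.restrict, ?_⟩
  refine HasFiniteIntegral.restrict_of_bounded (C := C) measure_Ioc_lt_top ?_
  exact (ae_restrict_iff' measurableSet_Ioc).2 (ae_of_all _ fun x hx => by
    simpa [Real.norm_eq_abs] using hC x hx)

lemma intervalIntegrable_of_bound {g : ℝ → ℝ} (hg : Measurable g) (u v C : ℝ)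
    (hC : ∀ x ∈ Set.uIoc u v, |g x| ≤ C) : IntervalIntegrable g volume u v := by
  rw [intervalIntegrable_iff]
  rw [Set.uIoc] at hC
  exact integrableOn_Ioc_of_bound hg _ _ C hC

set_option maxHeartbeats 2000000

lemma cone_ineq (k : ℕ) {b c₀ p τ : ℝ} {φ : ℝ → ℝ} (hb : 0 < b)
    (hmeas : Measurable φ)
    (hφ0 : φ 0 = c₀)
    (hconc : ConcaveOn ℝ (Set.Icc 0 b) φ)
    (h0 : ∀ v ∈ Set.Icc 0 b, 0 ≤ φ v)
    (hub : ∀ v ∈ Set.Icc 0 b, φ v ≤ c₀)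
    (hposφ : ∀ v ∈ Set.Ioo 0 b, 0 < φ v)
    (hp : p ∈ Set.Icc 0 b) (hτ0 : 0 ≤ τ) (hτ : τ ≤ φ p) :
    p * c₀ ^ (k+1) + ((k:ℝ)+1) * τ * (∫ v in Set.Ioc (0:ℝ) b, φ v ^ k)
      ≤ ((k:ℝ)+2) * ∫ v in Set.Ioc (0:ℝ) b, φ v ^ (k+1) := by
  have hp0 : 0 ≤ p := hp.1
  have hpb : p ≤ b := hp.2
  have hc₀ : 0 ≤ c₀ := hφ0 ▸ h0 0 ⟨le_refl 0, hb.le⟩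
  have hbdd : ∀ (j : ℕ), ∀ x ∈ Set.Icc (0:ℝ) b, |φ x ^ j| ≤ c₀ ^ j := by
    intro j x hx
    rw [abs_of_nonneg (pow_nonneg (h0 x hx) j)]
    exact pow_le_pow_left₀ (h0 x hx) (hub x hx) j
  have huIoc : ∀ u v : ℝ, u ∈ Set.Icc (0:ℝ) b → v ∈ Set.Icc (0:ℝ) b →
      Set.uIoc u v ⊆ Set.Icc 0 b := by
    intro u v hu hv x hx
    exact ⟨le_trans (le_min hu.1 hv.1) hx.1.le, le_trans hx.2 (max_le hu.2 hv.2)⟩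
  have hii : ∀ (j : ℕ) (u v : ℝ), u ∈ Set.Icc (0:ℝ) b → v ∈ Set.Icc (0:ℝ) b →
      IntervalIntegrable (fun x => φ x ^ j) volume u v := by
    intro j u v hu hv
    exact intervalIntegrable_of_bound (hmeas.pow_const j) u v (c₀^j)
      (fun x hx => hbdd j x (huIoc u v hu hv hx))
  set I1 : ℝ := ∫ v in (0:ℝ)..b, φ v ^ (k+1) with hI1
  set I0 : ℝ := ∫ v in (0:ℝ)..b, φ v ^ k with hI0
  have hgoal1 : (∫ v in Set.Ioc (0:ℝ) b, φ v ^ (k+1)) = I1 :=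
    (intervalIntegral.integral_of_le hb.le).symm
  have hgoal0 : (∫ v in Set.Ioc (0:ℝ) b, φ v ^ k) = I0 :=
    (intervalIntegral.integral_of_le hb.le).symm
  rw [hgoal0, hgoal1]
  have hI1nn : 0 ≤ I1 :=
    intervalIntegral.integral_nonneg hb.le (fun u hu => pow_nonneg (h0 u hu) _)
  set ε : ℕ → ℝ := fun n => 1/((n:ℝ)+2) with hεdef
  have hε0 : ∀ n, 0 < ε n := fun n => by positivity
  have hεhalf : ∀ n, ε n ≤ 1/2 := by
    intro n
    apply one_div_le_one_div_of_le
    · norm_num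
    · have : (0:ℝ) ≤ (n:ℝ) := Nat.cast_nonneg n
      linarith
  have hε1 : ∀ n, ε n < 1 := fun n => lt_of_le_of_lt (hεhalf n) (by norm_num)
  have hεanti : ∀ n, ε (n+1) ≤ ε n := by
    intro n
    apply one_div_le_one_div_of_le
    · have : (0:ℝ) ≤ (n:ℝ) := Nat.cast_nonneg n
      linarith
    · push_cast; linarith
  have hεto : Tendsto ε atTop (nhds 0) := by
    have h : Tendsto (fun n : ℕ => ((n:ℝ)+2)) atTop atTop :=
      tendsto_atTop_add_const_right _ 2 tendsto_natCast_atTop_atTop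
    simpa [hεdef, one_div, Pi.inv_def] using h.inv_tendsto_atTop
  set g : ℕ → ℝ → ℝ := fun n x => if ε n * τ ≤ φ x then (φ x - ε n * τ)^k else 0 with hgdef
  set J : ℕ → Set ℝ := fun n => Set.Ioc (ε n * p) (ε n * p + (1 - ε n) * b) with hJdef
  set F : ℕ → ℝ → ℝ := fun n => (J n).indicator (g n) with hFdef
  set En : ℕ → ℝ := fun n => ∫ x, F n x with hEndef
  have hgmeas : ∀ n, Measurable (g n) :=
    fun n => Measurable.ite (measurableSet_le measurable_const hmeas)
      ((hmeas.sub_const _).pow_const k) measurable_const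
  have hgnn : ∀ n x, 0 ≤ g n x := by
    intro n x
    simp only [hgdef]
    split_ifs with h
    · exact pow_nonneg (by linarith) k
    · exact le_refl 0
  have hgbd : ∀ n, ∀ x ∈ Set.Icc (0:ℝ) b, |g n x| ≤ c₀ ^ k := by
    intro n x hx
    rw [abs_of_nonneg (hgnn n x)]
    simp only [hgdef]
    split_ifs with h
    · refine pow_le_pow_left₀ (by linarith) ?_ k
      calc φ x - ε n * τ ≤ φ x := by nlinarith [hε0 n]
        _ ≤ c₀ := hub x hx
    · positivity
  have hJsub : ∀ n, J n ⊆ Set.Ioc 0 b := by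
    intro n x hx
    refine ⟨lt_of_le_of_lt (by positivity) hx.1, le_trans hx.2 ?_⟩
    nlinarith [hε0 n, hε1 n]
  set K : ℝ := ((k:ℝ)+1) * (p*p) * c₀^(k+1) / b with hKdef
  have key : ∀ n : ℕ, p * c₀^(k+1) - ε n * K + ((k:ℝ)+1) * τ * En n ≤ ((k:ℝ)+2) * I1 := by
    intro n
    set e : ℝ := ε n with hedef
    set l : ℝ := 1 - e with hldef
    have he0 : 0 < e := hε0 n
    have he1 : e < 1 := hε1 n
    have hl0 : 0 < l := by simp only [hldef]; linarith
    have hl1 : l ≤ 1 := by simp only [hldef]; linarith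
    have hep0 : 0 ≤ e * p := by positivity
    have hepp : e * p ≤ p := by nlinarith
    have hepb : e * p ∈ Set.Icc (0:ℝ) b := ⟨hep0, le_trans hepp hpb⟩
    have hmid : e * p ≤ e * p + l * b := by nlinarith
    have hendb : e * p + l * b ≤ b := by nlinarith
    have hendm : e * p + l * b ∈ Set.Icc (0:ℝ) b := ⟨le_trans hep0 hmid, hendb⟩
    have h0b : (0:ℝ) ∈ Set.Icc (0:ℝ) b := ⟨le_refl 0, hb.le⟩
    have hbb : b ∈ Set.Icc (0:ℝ) b := ⟨hb.le, le_refl b⟩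
    have hsubIcc : Set.Icc (e*p) (e*p + l*b) ⊆ Set.Icc 0 b :=
      fun x hx => ⟨le_trans hep0 hx.1, le_trans hx.2 hendb⟩
    set mx : ℝ → ℝ := fun v => max (φ v - e * τ) 0 with hmxdef
    have hmxmeas : Measurable mx := (hmeas.sub_const _).max measurable_const
    have hmxbd : ∀ x ∈ Set.Icc (0:ℝ) b, |mx x ^ (k+1)| ≤ c₀ ^ (k+1) := by
      intro x hx
      rw [abs_of_nonneg (pow_nonneg (le_max_right _ _) _)]
      refine pow_le_pow_left₀ (le_max_right _ _) ?_ _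
      refine max_le ?_ hc₀
      nlinarith [hub x hx, hτ0, he0]
    have hmxii : IntervalIntegrable (fun v => mx v ^ (k+1)) volume (e*p) (e*p+l*b) :=
      intervalIntegrable_of_bound (hmxmeas.pow_const _) _ _ (c₀^(k+1))
        (fun x hx => hmxbd x (huIoc _ _ hepb hendm hx))
    set sc : ℝ → ℝ := fun v => l^(k+1) * (fun u => φ u ^ (k+1)) ((1/l) * v + (-(e*p)/l)) with hscdef
    have hscmeas : Measurable sc := by
      apply Measurable.const_mul
      exact (hmeas.comp ((measurable_id.const_mul _).add_const _)).pow_const _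
    have hform : ∀ x : ℝ, (1/l) * x + (-(e*p)/l) = (x - e*p)/l := by
      intro x; field_simp [hl0.ne']; ring
    have htrans : ∀ x ∈ Set.Icc (e*p) (e*p + l*b), (1/l) * x + (-(e*p)/l) ∈ Set.Icc (0:ℝ) b := by
      intro x hx
      rw [hform]
      constructor
      · exact div_nonneg (by linarith [hx.1]) hl0.le
      · rw [div_le_iff₀ hl0]
        nlinarith [hx.2]
    have hscii : IntervalIntegrable sc volume (e*p) (e*p+l*b) := by
      refine intervalIntegrable_of_bound hscmeas _ _ (c₀^(k+1)) ?_
      intro x hx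
      rw [Set.uIoc_of_le hmid] at hx
      have hm := htrans x ⟨hx.1.le, hx.2⟩
      simp only [hscdef]
      rw [abs_mul, abs_of_nonneg (pow_nonneg hl0.le _)]
      calc l^(k+1) * |φ ((1/l) * x + (-(e*p)/l)) ^ (k+1)|
          ≤ 1 * c₀^(k+1) :=
            mul_le_mul (pow_le_one₀ hl0.le hl1) (hbdd _ _ hm) (abs_nonneg _) zero_le_one
        _ = c₀^(k+1) := one_mul _
    -- S4 : scaled copy fits under the max-part
    have hS4 : l^(k+2) * I1 ≤ ∫ v in (e*p)..(e*p+l*b), mx v ^ (k+1) := by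
      have hmono : ∀ x ∈ Set.Icc (e*p) (e*p+l*b), sc x ≤ mx x ^ (k+1) := by
        intro x hx
        have hw := htrans x hx
        set w : ℝ := (1/l) * x + (-(e*p)/l) with hwdef
        have hcomb := hconc.2 hp hw he0.le hl0.le (by simp only [hldef]; ring)
        simp only [smul_eq_mul] at hcomb
        have hxw : e * p + l * w = x := by
          simp only [hwdef]; field_simp; ring
        rw [hxw] at hcomb
        have h1 : l * φ w ≤ mx x := by
          simp only [hmxdef]
          refine le_max_iff.2 (Or.inl ?_)
          nlinarith [hcomb]
        have h2 : 0 ≤ l * φ w := mul_nonneg hl0.le (h0 w hw)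
        calc sc x = (l * φ w)^(k+1) := by simp only [hscdef, hwdef]; rw [mul_pow]
          _ ≤ mx x ^(k+1) := pow_le_pow_left₀ h2 h1 _
      have hint := intervalIntegral.integral_mono_on hmid hscii hmxii hmono
      have hcv : ∫ v in (e*p)..(e*p+l*b), sc v = l^(k+1) * (l * I1) := by
        simp only [hscdef]
        rw [intervalIntegral.integral_const_mul]
        congr 1
        rw [intervalIntegral.integral_comp_mul_add (fun u => φ u ^ (k+1))
          (one_div_ne_zero hl0.ne') (-(e*p)/l)]
        have hA : (1/l) * (e*p) + (-(e*p)/l) = 0 := by field_simp; ring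
        have hB : (1/l) * (e*p + l*b) + (-(e*p)/l) = b := by field_simp [hl0.ne']; ring
        rw [hA, hB, one_div, inv_inv, smul_eq_mul]
      rw [hcv] at hint
      calc l^(k+2) * I1 = l^(k+1) * (l * I1) := by ring
        _ ≤ _ := hint
    -- S5 : slab part
    have hgii : IntervalIntegrable (g n) volume (e*p) (e*p+l*b) :=
      intervalIntegrable_of_bound (hgmeas n) _ _ (c₀^k) (fun x hx => by
        rw [Set.uIoc_of_le hmid] at hx
        exact hgbd n x (hsubIcc ⟨hx.1.le, hx.2⟩))
    have hdiffii : IntervalIntegrable (fun v => φ v ^ (k+1) - mx v ^(k+1)) volume (e*p) (e*p+l*b) :=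
      (hii (k+1) _ _ hepb hendm).sub hmxii
    have hS5 : ((k:ℝ)+1) * (e*τ) * (∫ v in (e*p)..(e*p+l*b), g n v)
        ≤ ∫ v in (e*p)..(e*p+l*b), (φ v ^(k+1) - mx v ^(k+1)) := by
      rw [← intervalIntegral.integral_const_mul]
      refine intervalIntegral.integral_mono_on hmid (hgii.const_mul _) hdiffii ?_
      intro x hx
      have hxb : x ∈ Set.Icc (0:ℝ) b := hsubIcc hx
      by_cases hcase : e * τ ≤ φ x
      · have hgx : g n x = (φ x - e*τ)^k := if_pos hcase
        have hmx : mx x = φ x - e*τ := max_eq_left (by linarith)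
        rw [hgx, hmx]
        have hpb2 := pow_succ_bound k (s := φ x - e*τ) (c := e*τ) (by linarith) (by positivity)
        have hsc2 : φ x - e*τ + e*τ = φ x := by ring
        rw [hsc2] at hpb2
        nlinarith [hpb2]
      · have hgx : g n x = 0 := if_neg hcase
        have hmx : mx x = 0 := max_eq_right (by push_neg at hcase; linarith)
        rw [hgx, hmx]
        have hnn : (0:ℝ) ≤ φ x ^ (k+1) := pow_nonneg (h0 x hxb) _
        simp [zero_pow, hnn]
    -- S3 : exact split of middle integral
    have hS3 : ∫ v in (e*p)..(e*p+l*b), φ v ^(k+1)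
        = (∫ v in (e*p)..(e*p+l*b), mx v ^(k+1))
          + ∫ v in (e*p)..(e*p+l*b), (φ v ^(k+1) - mx v ^(k+1)) := by
      rw [← intervalIntegral.integral_add hmxii hdiffii]
      refine intervalIntegral.integral_congr ?_
      intro x _
      ring
    -- S6 : left piece
    have hchord : ∀ x ∈ Set.Icc (0:ℝ) (e*p), (c₀*(1 - e*p/b))^(k+1) ≤ φ x ^ (k+1) := by
      intro x hx
      have hxb : x ∈ Set.Icc (0:ℝ) b := ⟨hx.1, le_trans hx.2 (le_trans hepp hpb)⟩
      have hxb1 : x/b ≤ 1 := (div_le_one hb).2 hxb.2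
      have hxb0 : 0 ≤ x/b := div_nonneg hx.1 hb.le
      have hcomb := hconc.2 h0b hbb (show (0:ℝ) ≤ 1 - x/b by linarith) hxb0 (show (1 - x/b) + x/b = 1 by ring)
      simp only [smul_eq_mul] at hcomb
      have hpt : (1 - x/b) * (0:ℝ) + (x/b) * b = x := by field_simp; ring
      rw [hpt, hφ0] at hcomb
      have hφb : 0 ≤ φ b := h0 b hbb
      have hepb1 : e*p/b ≤ 1 := (div_le_one hb).2 (le_trans hepp hpb)
      have hxep : x/b ≤ e*p/b := by
        gcongr
        exact hx.2
      have h1 : c₀*(1 - e*p/b) ≤ φ x := by nlinarith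
      exact pow_le_pow_left₀ (by nlinarith) h1 _
    have hS6 : e*p*c₀^(k+1) - e*e*K ≤ ∫ v in (0:ℝ)..(e*p), φ v ^ (k+1) := by
      have hmono := intervalIntegral.integral_mono_on hep0
        (intervalIntegrable_const) (hii (k+1) 0 (e*p) h0b hepb) hchord
      rw [intervalIntegral.integral_const, smul_eq_mul, sub_zero] at hmono
      refine le_trans ?_ hmono
      have hepb1 : e*p/b ≤ 1 := (div_le_one hb).2 (le_trans hepp hpb)
      have hBern : 1 - ((k:ℝ)+1) * (e*p/b) ≤ (1 - e*p/b)^(k+1) := by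
        have h := one_add_mul_le_pow (a := -(e*p/b)) (by linarith) (k+1)
        push_cast at h
        calc 1 - ((k:ℝ)+1) * (e*p/b) = 1 + ((k:ℝ)+1) * (-(e*p/b)) := by ring
          _ ≤ (1 + (-(e*p/b)))^(k+1) := h
          _ = (1 - e*p/b)^(k+1) := by ring_nf
      have hq : (0:ℝ) ≤ e*p*c₀^(k+1) := by positivity
      have h1 : e*p*c₀^(k+1)*(1 - ((k:ℝ)+1)*(e*p/b)) ≤ e*p*((c₀*(1-e*p/b))^(k+1)) := by
        have := mul_le_mul_of_nonneg_left hBern hq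
        calc e*p*c₀^(k+1)*(1 - ((k:ℝ)+1)*(e*p/b))
            = e*p*c₀^(k+1)*(1 - ((k:ℝ)+1)*(e*p/b)) := rfl
          _ ≤ e*p*c₀^(k+1)*((1 - e*p/b)^(k+1)) := this
          _ = e*p*((c₀*(1-e*p/b))^(k+1)) := by rw [mul_pow]; ring
      have hid : e*p*c₀^(k+1)*(1 - ((k:ℝ)+1)*(e*p/b)) = e*p*c₀^(k+1) - e*e*K := by
        simp only [hKdef]
        field_simp
      rw [hid] at h1
      exact h1
    -- assemble
    have hsplit1 : (∫ v in (0:ℝ)..(e*p), φ v ^(k+1)) + (∫ v in (e*p)..(e*p+l*b), φ v ^(k+1))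
        = ∫ v in (0:ℝ)..(e*p+l*b), φ v ^(k+1) :=
      intervalIntegral.integral_add_adjacent_intervals (hii _ _ _ h0b hepb) (hii _ _ _ hepb hendm)
    have hsplit2 : (∫ v in (0:ℝ)..(e*p+l*b), φ v ^(k+1)) + (∫ v in (e*p+l*b)..b, φ v ^(k+1)) = I1 :=
      intervalIntegral.integral_add_adjacent_intervals (hii _ _ _ h0b hendm) (hii _ _ _ hendm hbb)
    have h3rd : 0 ≤ ∫ v in (e*p+l*b)..b, φ v ^ (k+1) :=
      intervalIntegral.integral_nonneg hendb
        (fun u hu => pow_nonneg (h0 u ⟨le_trans (le_trans hep0 hmid) hu.1, hu.2⟩) _)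
    have hEnval : En n = ∫ v in (e*p)..(e*p+l*b), g n v := by
      simp only [hEndef, hFdef]
      rw [integral_indicator measurableSet_Ioc]
      rw [intervalIntegral.integral_of_le hmid]
    have hmain : e*p*c₀^(k+1) - e*e*K
        + ((k:ℝ)+1)*(e*τ)*(∫ v in (e*p)..(e*p+l*b), g n v) + l^(k+2)*I1 ≤ I1 := by
      linarith [hS4, hS5, hS6, hS3, hsplit1, hsplit2, h3rd]
    have hBern2 : 1 - l^(k+2) ≤ ((k:ℝ)+2)*e := by
      have h := one_add_mul_le_pow (a := -e) (by linarith) (k+2)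
      push_cast at h
      have : (1 + -e) ^ (k+2) = l^(k+2) := by simp only [hldef]; ring_nf
      rw [this] at h
      linarith
    have hx2 : e * (p*c₀^(k+1) - e*K + ((k:ℝ)+1)*τ*En n) ≤ e * (((k:ℝ)+2)*I1) := by
      have h1 : e * (p*c₀^(k+1) - e*K + ((k:ℝ)+1)*τ*En n)
          = e*p*c₀^(k+1) - e*e*K + ((k:ℝ)+1)*(e*τ)*(∫ v in (e*p)..(e*p+l*b), g n v) := by
        rw [hEnval]; ring
      have h2 : (1 - l^(k+2))*I1 ≤ (((k:ℝ)+2)*e)*I1 :=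
        mul_le_mul_of_nonneg_right hBern2 hI1nn
      have h3 : e * (p*c₀^(k+1) - e*K + ((k:ℝ)+1)*τ*En n) ≤ (1 - l^(k+2))*I1 := by
        rw [h1]; nlinarith [hmain]
      calc e * (p*c₀^(k+1) - e*K + ((k:ℝ)+1)*τ*En n) ≤ (1 - l^(k+2))*I1 := h3
        _ ≤ (((k:ℝ)+2)*e)*I1 := h2
        _ = e * (((k:ℝ)+2)*I1) := by ring
    exact (mul_le_mul_iff_right₀ he0).1 hx2
  -- limit machinery
  have hFint : ∀ n, Integrable (F n) := by
    intro n
    refine (integrable_indicator_iff measurableSet_Ioc).2 ?_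
    refine integrableOn_Ioc_of_bound (hgmeas n) _ _ (c₀^k) ?_
    intro x hx
    have h2 := hJsub n hx
    exact hgbd n x ⟨h2.1.le, h2.2⟩
  set H : ℝ → ℝ := (Set.Ioo (0:ℝ) b).indicator (fun v => φ v ^ k) with hHdef
  have hHint : Integrable H := by
    refine (integrable_indicator_iff measurableSet_Ioo).2 ?_
    refine IntegrableOn.mono_set ?_ Set.Ioo_subset_Ioc_self
    refine integrableOn_Ioc_of_bound (hmeas.pow_const k) _ _ (c₀^k) ?_
    intro x hx
    exact hbdd k x ⟨hx.1.le, hx.2⟩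
  have hmono : ∀ x, Monotone (fun n => F n x) := by
    intro x
    apply monotone_nat_of_le_succ
    intro n
    simp only [hFdef]
    by_cases hx : x ∈ J n
    · have hx' : x ∈ J (n+1) := by
        constructor
        · have h1 : ε (n+1) * p ≤ ε n * p := mul_le_mul_of_nonneg_right (hεanti n) hp0
          exact lt_of_le_of_lt h1 hx.1
        · refine le_trans hx.2 ?_
          nlinarith [mul_nonneg (sub_nonneg.2 (hεanti n)) (sub_nonneg.2 hpb)]
      rw [Set.indicator_of_mem hx, Set.indicator_of_mem hx']
      have hττ : ε (n+1) * τ ≤ ε n * τ := mul_le_mul_of_nonneg_right (hεanti n) hτ0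
      by_cases hc : ε n * τ ≤ φ x
      · have hc' : ε (n+1) * τ ≤ φ x := le_trans hττ hc
        simp only [hgdef]
        rw [if_pos hc, if_pos hc']
        exact pow_le_pow_left₀ (by linarith) (by linarith) k
      · simp only [hgdef]
        rw [if_neg hc]
        split_ifs with h
        · exact pow_nonneg (by linarith) k
        · exact le_refl 0
    · rw [Set.indicator_of_notMem hx]
      exact Set.indicator_nonneg (fun y _ => hgnn (n+1) y) x
  have hae : ∀ᵐ x : ℝ, x ≠ b := by
    rw [ae_iff]
    have hset : {x : ℝ | ¬ x ≠ b} = {b} := by ext y; simp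
    rw [hset]
    exact measure_singleton b
  have htends : ∀ᵐ x : ℝ, Tendsto (fun n => F n x) atTop (nhds (H x)) := by
    filter_upwards [hae] with x hxb
    by_cases hx : x ∈ Set.Ioo (0:ℝ) b
    · have hφx : 0 < φ x := hposφ x hx
      have hHx : H x = φ x ^ k := Set.indicator_of_mem hx _
      have t1 : Tendsto (fun n => ε n * p) atTop (nhds 0) := by
        have h := hεto.mul_const p
        rw [zero_mul] at h
        exact h
      have ev1 : ∀ᶠ n in atTop, ε n * p < x := t1.eventually_lt_const hx.1
      have t2 : Tendsto (fun n => ε n * p + (1 - ε n) * b) atTop (nhds b) := by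
        have h := (hεto.mul_const p).add (((tendsto_const_nhds (x := (1:ℝ))).sub hεto).mul_const b)
        rw [show (0:ℝ)*p + ((1:ℝ) - 0)*b = b by ring] at h
        exact h
      have ev2 : ∀ᶠ n in atTop, x < ε n * p + (1 - ε n) * b := t2.eventually_const_lt hx.2
      have t3 : Tendsto (fun n => ε n * τ) atTop (nhds 0) := by
        have h := hεto.mul_const τ
        rw [zero_mul] at h
        exact h
      have ev3 : ∀ᶠ n in atTop, ε n * τ < φ x := t3.eventually_lt_const hφx
      have heq : ∀ᶠ n in atTop, F n x = (φ x - ε n * τ)^k := by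
        filter_upwards [ev1, ev2, ev3] with n h1 h2 h3
        have hmem : x ∈ J n := ⟨h1, h2.le⟩
        simp only [hFdef]
        rw [Set.indicator_of_mem hmem]
        simp only [hgdef]
        rw [if_pos h3.le]
      have tlim : Tendsto (fun n => (φ x - ε n * τ)^k) atTop (nhds ((φ x - 0)^k)) :=
        Tendsto.pow (tendsto_const_nhds.sub t3) k
      rw [hHx]
      refine Tendsto.congr' (Filter.EventuallyEq.symm heq) ?_
      rw [show φ x - 0 = φ x from sub_zero _] at tlim
      exact tlim
    · have hHx : H x = 0 := Set.indicator_of_notMem hx _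
      have hFx : ∀ n, F n x = 0 := by
        intro n
        simp only [hFdef]
        refine Set.indicator_of_notMem ?_ _
        intro hmem
        have h2 := hJsub n hmem
        apply hx
        rcases lt_or_eq_of_le h2.2 with h | h
        · exact ⟨h2.1, h⟩
        · exact absurd h hxb
      rw [hHx]
      have hfun : (fun n => F n x) = fun _ => (0:ℝ) := funext hFx
      rw [hfun]
      exact tendsto_const_nhds
  have hEnlim : Tendsto En atTop (nhds (∫ x, H x)) :=
    integral_tendsto_of_tendsto_of_monotone hFint hHint (ae_of_all _ hmono) htends
  have hHval : ∫ x, H x = I0 := by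
    simp only [hHdef]
    rw [integral_indicator measurableSet_Ioo, ← integral_Ioc_eq_integral_Ioo, hgoal0]
  rw [hHval] at hEnlim
  have hseq : Tendsto (fun n => p * c₀^(k+1) - ε n * K + ((k:ℝ)+1) * τ * En n) atTop
      (nhds (p * c₀^(k+1) - 0 * K + ((k:ℝ)+1) * τ * I0)) :=
    (tendsto_const_nhds.sub (hεto.mul_const K)).add (hEnlim.const_mul _)
  have hfin := le_of_tendsto' hseq key
  linarith [hfin]

lemma integral_even_decay {g : ℝ → ℝ} (hg : Measurable g) {r C : ℝ} (hr : 0 < r)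
    (hev : ∀ y, g (-y) = g y) (hzero : ∀ y, r < y → g y = 0) (hbdd : ∀ y, |g y| ≤ C) :
    ∫ y, g y = 2 * ∫ y in Set.Ioc (0:ℝ) r, g y := by
  have hind : g = (Set.Icc (-r) r).indicator g := by
    funext y
    by_cases hy : y ∈ Set.Icc (-r) r
    · rw [Set.indicator_of_mem hy]
    · rw [Set.indicator_of_notMem hy]
      simp only [Set.mem_Icc, not_and_or, not_le] at hy
      rcases hy with h | h
      · rw [← hev y]
        exact hzero (-y) (by linarith)
      · exact hzero y h
  have hii : ∀ u v : ℝ, IntervalIntegrable g volume u v :=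
    fun u v => intervalIntegrable_of_bound hg u v C (fun x _ => hbdd x)
  calc ∫ y, g y = ∫ y, (Set.Icc (-r) r).indicator g y := by rw [← hind]
    _ = ∫ y in Set.Icc (-r) r, g y := integral_indicator measurableSet_Icc
    _ = ∫ y in Set.Ioc (-r) r, g y := integral_Icc_eq_integral_Ioc
    _ = ∫ y in (-r)..r, g y := (intervalIntegral.integral_of_le (by linarith)).symm
    _ = (∫ y in (-r)..(0:ℝ), g y) + ∫ y in (0:ℝ)..r, g y :=
        (intervalIntegral.integral_add_adjacent_intervals (hii _ _) (hii _ _)).symm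
    _ = 2 * ∫ y in (0:ℝ)..r, g y := by
        have h2 := intervalIntegral.integral_comp_neg (a := -r) (b := 0) g
        simp only [hev] at h2
        rw [h2]
        simp only [neg_zero, neg_neg]
        ring
    _ = 2 * ∫ y in Set.Ioc (0:ℝ) r, g y := by rw [intervalIntegral.integral_of_le hr.le]

open MeasureTheory

/-- The polar `Lf` of a nonnegative function `f : ℝ → ℝ`:
`Lf(y) = inf_{x : f(x) > 0} (1 - x*y)₊ / f(x)`. -/
noncomputable def Lpolar (f : ℝ → ℝ) (y : ℝ) : ℝ :=
  ⨅ x : {x : ℝ // 0 < f x}, max (1 - x.1 * y) 0 / f x.1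

/-- The functional volume product `P_m(f) = ∫ f^m · ∫ (Lf)^m`. -/
noncomputable def Pm (f : ℝ → ℝ) (m : ℕ) : ℝ :=
  (∫ x, f x ^ m) * (∫ y, Lpolar f y ^ m)

theorem volume_product_lower_bound_dim1
    (m : ℕ) (hm : 0 < m) (a : ℝ) (ha : 0 < a) (f : ℝ → ℝ)
    (hnonneg : ∀ x, 0 ≤ f x)
    (heven : ∀ x, f (-x) = f x)
    (hsupp : closure {x | 0 < f x} = Set.Icc (-a) a)
    (hconc : ConcaveOn ℝ (Set.Icc (-a) a) f)
    (hint : Integrable f)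
    (hpos : 0 < ∫ x, f x) :
    Pm f m ≥ 4 / ((m : ℝ) + 1) := by
  obtain ⟨k, rfl⟩ : ∃ k, m = k + 1 := ⟨m - 1, (Nat.succ_pred_eq_of_pos hm).symm⟩
  -- structural facts about f
  have hssub : {x | 0 < f x} ⊆ Set.Icc (-a) a := hsupp ▸ subset_closure
  have hzero : ∀ x, x ∉ Set.Icc (-a) a → f x = 0 := by
    intro x hx
    by_contra h
    exact hx (hssub (lt_of_le_of_ne (hnonneg x) (Ne.symm h)))
  have hIoo : ∀ z ∈ Set.Ioo (-a) a, 0 < f z := by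
    intro z hz
    have h1 : (-a) ∈ closure {x | 0 < f x} := by rw [hsupp]; exact ⟨le_refl _, by linarith [hz.1, hz.2]⟩
    have h2 : a ∈ closure {x | 0 < f x} := by rw [hsupp]; exact ⟨by linarith [hz.1, hz.2], le_refl _⟩
    obtain ⟨x₁, hx₁z', hx₁s⟩ := mem_closure_iff.1 h1 (Set.Iio z) isOpen_Iio hz.1
    obtain ⟨x₂, hx₂z', hx₂s⟩ := mem_closure_iff.1 h2 (Set.Ioi z) isOpen_Ioi hz.2
    have hx₁z : x₁ < z := hx₁z'
    have hx₂z : z < x₂ := hx₂z'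
    have hlt : x₁ < x₂ := lt_trans hx₁z hx₂z
    have hd : (0:ℝ) < x₂ - x₁ := by linarith
    have hlam : (0:ℝ) < (x₂ - z)/(x₂ - x₁) := by
      apply div_pos _ hd; linarith [hx₂z]
    have hmu : (0:ℝ) < (z - x₁)/(x₂ - x₁) := by
      apply div_pos _ hd; linarith [hx₁z]
    have hsum : (x₂ - z)/(x₂ - x₁) + (z - x₁)/(x₂ - x₁) = 1 := by
      field_simp; ring
    have hcomb := hconc.2 (hssub hx₁s) (hssub hx₂s) hlam.le hmu.le hsum
    simp only [smul_eq_mul] at hcomb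
    have hpt : (x₂ - z)/(x₂ - x₁) * x₁ + (z - x₁)/(x₂ - x₁) * x₂ = z := by
      field_simp; ring
    rw [hpt] at hcomb
    have := add_pos (mul_pos hlam hx₁s) (mul_pos hmu hx₂s)
    linarith
  have hM : 0 < f 0 := hIoo 0 ⟨by linarith, ha⟩
  set M : ℝ := f 0 with hMdef
  have hfM : ∀ x, f x ≤ M := by
    intro x
    by_cases hx : x ∈ Set.Icc (-a) a
    · have hx' : -x ∈ Set.Icc (-a) a := by
        simp only [Set.mem_Icc] at hx ⊢; constructor <;> linarith [hx.1, hx.2]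
      have hcomb := hconc.2 hx hx' (by norm_num : (0:ℝ) ≤ 1/2) (by norm_num : (0:ℝ) ≤ 1/2) (by norm_num)
      simp only [smul_eq_mul] at hcomb
      have hpt : (1/2:ℝ) * x + (1/2) * (-x) = 0 := by ring
      rw [hpt] at hcomb
      rw [heven x] at hcomb
      simp only [hMdef]
      linarith
    · rw [hzero x hx]; exact hM.le
  have hfanti : ∀ x₁ x₂ : ℝ, 0 ≤ x₁ → x₁ ≤ x₂ → f x₂ ≤ f x₁ := by
    intro x₁ x₂ h0 h12
    by_cases hx₂a : x₂ ≤ a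
    · rcases eq_or_lt_of_le (le_trans h0 h12) with h | h
      · rw [← h] at h12
        have : x₁ = 0 := le_antisymm (h ▸ h12) h0
        rw [this, ← h]
      · have hm2 : x₂ ∈ Set.Icc (-a) a := ⟨by linarith, hx₂a⟩
        have hm2' : -x₂ ∈ Set.Icc (-a) a := ⟨by linarith, by linarith⟩
        have hlam : (0:ℝ) ≤ (x₂ - x₁)/(2*x₂) := div_nonneg (by linarith) (by linarith)
        have hmu : (0:ℝ) ≤ (x₂ + x₁)/(2*x₂) := div_nonneg (by linarith) (by linarith)
        have hsum : (x₂ - x₁)/(2*x₂) + (x₂ + x₁)/(2*x₂) = 1 := by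
          field_simp; ring
        have hcomb := hconc.2 hm2' hm2 hlam hmu hsum
        simp only [smul_eq_mul] at hcomb
        have hpt : (x₂ - x₁)/(2*x₂) * (-x₂) + (x₂ + x₁)/(2*x₂) * x₂ = x₁ := by
          field_simp; ring
        rw [hpt, heven x₂] at hcomb
        have h9 : (x₂ - x₁) / (2 * x₂) * f x₂ + (x₂ + x₁) / (2 * x₂) * f x₂ = f x₂ := by
          rw [← add_mul, hsum, one_mul]
        linarith
    · push_neg at hx₂a
      rw [hzero x₂ (by intro hmem; exact absurd hmem.2 (not_le.2 hx₂a))]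
      exact hnonneg x₁
  have hfmeas : Measurable f := by
    have h1 : Antitone (fun y => f (max y 0)) :=
      fun y₁ y₂ h => hfanti _ _ (le_max_right _ _) (max_le_max h (le_refl 0))
    have h2 : Measurable ((fun y => f (max y 0)) ∘ (fun x : ℝ => |x|)) :=
      h1.measurable.comp measurable_abs
    have h3 : ((fun y => f (max y 0)) ∘ (fun x : ℝ => |x|)) = f := by
      funext x
      simp only [Function.comp_apply, max_eq_left (abs_nonneg x)]
      rcases le_or_gt 0 x with h | h
      · rw [abs_of_nonneg h]
      · rw [abs_of_neg h, heven]
    rwa [h3] at h2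
  -- Lpolar properties
  haveI hne : Nonempty {x : ℝ // 0 < f x} := ⟨⟨0, hM⟩⟩
  have hbdb : ∀ y : ℝ, BddBelow (Set.range fun x : {x : ℝ // 0 < f x} => max (1 - x.1*y) 0 / f x.1) := by
    intro y
    refine ⟨0, ?_⟩
    rintro t ⟨x, rfl⟩
    exact div_nonneg (le_max_right _ _) x.2.le
  have hLnn : ∀ y, 0 ≤ Lpolar f y :=
    fun y => le_ciInf fun x => div_nonneg (le_max_right _ _) x.2.le
  have hLle : ∀ (y : ℝ) (x : {x : ℝ // 0 < f x}), Lpolar f y ≤ max (1 - x.1*y) 0 / f x.1 :=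
    fun y x => ciInf_le (hbdb y) x
  have hLM : ∀ y, Lpolar f y ≤ M⁻¹ := by
    intro y
    refine le_trans (hLle y ⟨0, hM⟩) ?_
    simp [one_div, hMdef]
  have hL0 : Lpolar f 0 = M⁻¹ := by
    refine le_antisymm (hLM 0) (le_ciInf fun x => ?_)
    simp only [mul_zero, sub_zero, max_eq_left zero_le_one]
    rw [one_div]
    exact inv_anti₀ x.2 (hfM x.1)
  have hLsym : ∀ y, Lpolar f (-y) ≤ Lpolar f y := by
    intro y
    refine le_ciInf fun x => ?_
    have hx' : 0 < f (-x.1) := by rw [heven]; exact x.2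
    refine le_trans (hLle (-y) ⟨-x.1, hx'⟩) (le_of_eq ?_)
    simp only [neg_mul_neg, heven]
  have heLf : ∀ y, Lpolar f (-y) = Lpolar f y := by
    intro y
    refine le_antisymm (hLsym y) ?_
    have := hLsym (-y)
    rwa [neg_neg] at this
  have hLanti : ∀ y₁ y₂ : ℝ, 0 ≤ y₁ → y₁ ≤ y₂ → Lpolar f y₂ ≤ Lpolar f y₁ := by
    intro y₁ y₂ h0 h12
    refine le_ciInf fun x => ?_
    rcases le_or_gt 0 x.1 with hx | hx
    · refine le_trans (hLle y₂ x) ?_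
      refine (div_le_div_iff_of_pos_right x.2).2 ?_
      refine max_le_max ?_ (le_refl 0)
      nlinarith [mul_le_mul_of_nonneg_left h12 hx]
    · have hx' : 0 < f (-x.1) := by rw [heven]; exact x.2
      refine le_trans (hLle y₂ ⟨-x.1, hx'⟩) ?_
      have hfx : f (-x.1) = f x.1 := heven x.1
      simp only [hfx]
      refine (div_le_div_iff_of_pos_right x.2).2 ?_
      refine max_le (le_trans ?_ (le_max_left _ _)) (le_max_right _ _)
      nlinarith [mul_nonneg (le_of_lt (neg_pos.2 hx)) (le_trans h0 h12),
        mul_nonneg (le_of_lt (neg_pos.2 hx)) h0]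
  have hLmeas : Measurable (Lpolar f) := by
    have h1 : Antitone (fun y => Lpolar f (max y 0)) :=
      fun y₁ y₂ h => hLanti _ _ (le_max_right _ _) (max_le_max h (le_refl 0))
    have h2 : Measurable ((fun y => Lpolar f (max y 0)) ∘ (fun x : ℝ => |x|)) :=
      h1.measurable.comp measurable_abs
    have h3 : ((fun y => Lpolar f (max y 0)) ∘ (fun x : ℝ => |x|)) = Lpolar f := by
      funext x
      simp only [Function.comp_apply, max_eq_left (abs_nonneg x)]
      rcases le_or_gt 0 x with h | h
      · rw [abs_of_nonneg h]
      · rw [abs_of_neg h]; exact heLf x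
    rwa [h3] at h2
  have hLzero : ∀ y : ℝ, a⁻¹ < y → Lpolar f y = 0 := by
    intro y hy
    have hy0 : 0 < y := lt_trans (by positivity) hy
    have haa : a * a⁻¹ = 1 := mul_inv_cancel₀ ha.ne'
    have hyy : y * y⁻¹ = 1 := mul_inv_cancel₀ hy0.ne'
    have hinva : y⁻¹ < a := by
      have h1 : a⁻¹ * a < y * a := by nlinarith
      nlinarith [inv_pos.2 hy0]
    set x : ℝ := (y⁻¹ + a)/2 with hxdef
    have hx1 : y⁻¹ < x := by rw [hxdef]; linarith
    have hx2 : x < a := by rw [hxdef]; linarith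
    have hx0 : 0 < x := lt_trans (inv_pos.2 hy0) hx1
    have hxs : 0 < f x := hIoo x ⟨by linarith, hx2⟩
    have hterm : max (1 - x*y) 0 / f x = 0 := by
      have hgt : 1 < x * y := by nlinarith
      rw [max_eq_right (by linarith), zero_div]
    exact le_antisymm (le_trans (hLle y ⟨x, hxs⟩) (le_of_eq hterm)) (hLnn y)
  have hLlb : ∀ t : ℝ, 0 ≤ t → t ≤ a⁻¹ → (1 - a*t)/M ≤ Lpolar f t := by
    intro t h0t h1t
    have hat : a * t ≤ 1 := by
      have := mul_le_mul_of_nonneg_left h1t ha.le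
      rwa [mul_inv_cancel₀ ha.ne'] at this
    refine le_ciInf fun x => ?_
    have hxa : x.1 ≤ a := (hssub x.2).2
    have hnum : 1 - a*t ≤ max (1 - x.1*t) 0 :=
      le_trans (by nlinarith [mul_le_mul_of_nonneg_right hxa h0t]) (le_max_left _ _)
    calc (1 - a*t)/M ≤ (1 - a*t)/f x.1 :=
          div_le_div_of_nonneg_left (by linarith) x.2 (hfM x.1)
      _ ≤ max (1 - x.1*t) 0 / f x.1 := (div_le_div_iff_of_pos_right x.2).2 hnum
  have hLpos : ∀ t ∈ Set.Ioo (0:ℝ) a⁻¹, 0 < Lpolar f t := by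
    intro t ht
    refine lt_of_lt_of_le ?_ (hLlb t ht.1.le ht.2.le)
    have : a * t < 1 := by
      have := mul_lt_mul_of_pos_left ht.2 ha
      rwa [mul_inv_cancel₀ ha.ne'] at this
    exact div_pos (by linarith) hM
  have hLconc : ConcaveOn ℝ (Set.Icc 0 a⁻¹) (Lpolar f) := by
    refine ⟨convex_Icc _ _, ?_⟩
    intro y₁ h₁ y₂ h₂ lam mu hlam hmu hsum
    simp only [smul_eq_mul]
    refine le_ciInf fun x => ?_
    have hkey : ∀ y : ℝ, y ∈ Set.Icc (0:ℝ) a⁻¹ → x.1 * y ≤ 1 := by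
      intro y hy
      rcases le_or_gt 0 x.1 with hx | hx
      · have hxa : x.1 ≤ a := (hssub x.2).2
        have h1 : x.1 * y ≤ a * y := mul_le_mul_of_nonneg_right hxa hy.1
        have h2 : a * y ≤ a * a⁻¹ := mul_le_mul_of_nonneg_left hy.2 ha.le
        rw [mul_inv_cancel₀ ha.ne'] at h2
        linarith
      · nlinarith [hy.1]
    have hcm : lam * y₁ + mu * y₂ ∈ Set.Icc (0:ℝ) a⁻¹ := by
      constructor
      · have := add_nonneg (mul_nonneg hlam h₁.1) (mul_nonneg hmu h₂.1)
        linarith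
      · have h1 : lam * y₁ ≤ lam * a⁻¹ := mul_le_mul_of_nonneg_left h₁.2 hlam
        have h2 : mu * y₂ ≤ mu * a⁻¹ := mul_le_mul_of_nonneg_left h₂.2 hmu
        have h3 : lam * a⁻¹ + mu * a⁻¹ = a⁻¹ := by rw [← add_mul, hsum, one_mul]
        linarith
    have hterm : ∀ y : ℝ, y ∈ Set.Icc (0:ℝ) a⁻¹ → Lpolar f y ≤ (1 - x.1*y)/f x.1 := by
      intro y hy
      refine le_trans (hLle y x) (le_of_eq ?_)
      rw [max_eq_left (by linarith [hkey y hy])]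
    have h1 := hterm y₁ h₁
    have h2 := hterm y₂ h₂
    have hfx := x.2
    calc lam * Lpolar f y₁ + mu * Lpolar f y₂
        ≤ lam * ((1 - x.1*y₁)/f x.1) + mu * ((1 - x.1*y₂)/f x.1) :=
          add_le_add (mul_le_mul_of_nonneg_left h1 hlam) (mul_le_mul_of_nonneg_left h2 hmu)
      _ = (1 - x.1*(lam * y₁ + mu * y₂))/f x.1 := by
          rw [(mul_div_assoc lam _ (f x.1)).symm, (mul_div_assoc mu _ (f x.1)).symm,
            ← add_div]
          congr 1
          linear_combination hsum
      _ ≤ max (1 - x.1*(lam * y₁ + mu * y₂)) 0 / f x.1 :=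
          (div_le_div_iff_of_pos_right x.2).2 (le_max_left _ _)
  -- the A/B recursion
  set A : ℕ → ℝ := fun j => ∫ v in Set.Ioc (0:ℝ) a, f v ^ j with hAdef
  set B : ℕ → ℝ := fun j => ∫ v in Set.Ioc (0:ℝ) a⁻¹, Lpolar f v ^ j with hBdef
  have hA0 : A 0 = a := by
    simp only [hAdef, pow_zero]
    rw [setIntegral_const]
    simp [Real.volume_Ioc, ENNReal.toReal_ofReal ha.le, ha.le]
  have hB0 : B 0 = a⁻¹ := by
    simp only [hBdef, pow_zero]
    rw [setIntegral_const]
    simp [Real.volume_Ioc, ENNReal.toReal_ofReal (by positivity : (0:ℝ) ≤ a⁻¹), ha.le]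
  have hAnn : ∀ j, 0 ≤ A j :=
    fun j => setIntegral_nonneg measurableSet_Ioc (fun x _ => pow_nonneg (hnonneg x) j)
  have hBnn : ∀ j, 0 ≤ B j :=
    fun j => setIntegral_nonneg measurableSet_Ioc (fun x _ => pow_nonneg (hLnn x) j)
  have hfconc0a : ConcaveOn ℝ (Set.Icc 0 a) f :=
    hconc.subset (Set.Icc_subset_Icc (by linarith) (le_refl a)) (convex_Icc _ _)
  have hconeF : ∀ (j : ℕ) (p : ℝ), p ∈ Set.Icc 0 a →
      p * M^(j+1) + ((j:ℝ)+1) * f p * A j ≤ ((j:ℝ)+2) * A (j+1) := by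
    intro j p hp
    exact cone_ineq j ha hfmeas rfl hfconc0a (fun v _ => hnonneg v) (fun v _ => hfM v)
      (fun v hv => hIoo v ⟨by linarith [hv.1], hv.2⟩) hp (hnonneg p) (le_refl _)
  have main : ∀ j : ℕ, 1 ≤ ((j:ℝ)+1) * (A j * B j) := by
    intro j
    induction j with
    | zero =>
        rw [hA0, hB0]
        simp [mul_inv_cancel₀ ha.ne']
    | succ k ih =>
        have h1 := hconeF k
        have hMp : (0:ℝ) < M^(k+1) := pow_pos hM (k+1)
        have hAk1pos : 0 < A (k+1) := by
          have h2 := h1 a ⟨ha.le, le_refl a⟩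
          nlinarith [hAnn k, hnonneg a, mul_pos ha hMp, hAnn (k+1),
            mul_nonneg (mul_nonneg (by positivity : (0:ℝ) ≤ (k:ℝ)+1) (hnonneg a)) (hAnn k)]
        have hden : 0 < ((k:ℝ)+2) * A (k+1) := mul_pos (by positivity) hAk1pos
        set t₀ : ℝ := M^(k+1) / (((k:ℝ)+2) * A (k+1)) with ht₀def
        set u : ℝ := ((k:ℝ)+1) * A k / (((k:ℝ)+2) * A (k+1)) with hudef
        have ht₀0 : 0 ≤ t₀ := div_nonneg hMp.le hden.le
        have hu0 : 0 ≤ u :=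
          div_nonneg (mul_nonneg (by positivity) (hAnn k)) hden.le
        have ht₀a : t₀ ≤ a⁻¹ := by
          have h2 := h1 a ⟨ha.le, le_refl a⟩
          have h3 : a * M^(k+1) ≤ ((k:ℝ)+2)*A (k+1) := by
            nlinarith [mul_nonneg (mul_nonneg (by positivity : (0:ℝ) ≤ (k:ℝ)+1) (hnonneg a)) (hAnn k)]
          rw [ht₀def, div_le_iff₀ hden]
          calc M^(k+1) = a⁻¹ * (a * M^(k+1)) := by field_simp
            _ ≤ a⁻¹ * (((k:ℝ)+2)*A (k+1)) := mul_le_mul_of_nonneg_left h3 (by positivity)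
        have hut : u ≤ Lpolar f t₀ := by
          have hcase : ∀ z : ℝ, 0 < f z → 0 ≤ z → u ≤ max (1 - z * t₀) 0 / f z := by
            intro z hz h0z
            have hza : z ≤ a := (hssub hz).2
            have h2 := h1 z ⟨h0z, hza⟩
            have h3 : z * t₀ + u * f z ≤ 1 := by
              have hexp : z*t₀ + u*f z
                  = (z*M^(k+1) + ((k:ℝ)+1)*f z*A k)/(((k:ℝ)+2)*A (k+1)) := by
                rw [ht₀def, hudef]
                field_simp
              rw [hexp, div_le_one hden]
              linarith [h2]
            have h4 : u * f z ≤ 1 - z*t₀ := by linarith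
            have h5 : u ≤ (1 - z*t₀)/f z := (le_div_iff₀ hz).2 h4
            exact le_trans h5 ((div_le_div_iff_of_pos_right hz).2 (le_max_left _ _))
          refine le_ciInf fun x => ?_
          rcases le_or_gt 0 x.1 with h0x | h0x
          · exact hcase x.1 x.2 h0x
          · have hx' : 0 < f (-x.1) := by rw [heven]; exact x.2
            refine le_trans (hcase (-x.1) hx' (by linarith)) ?_
            have hfx : f (-x.1) = f x.1 := heven x.1
            rw [hfx]
            refine (div_le_div_iff_of_pos_right x.2).2 ?_
            refine max_le (le_trans ?_ (le_max_left _ _)) (le_max_right _ _)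
            nlinarith [mul_nonneg (le_of_lt (neg_pos.2 h0x)) ht₀0]
          -- end hut
        have h2 := cone_ineq k (b := a⁻¹) (c₀ := M⁻¹) (by positivity) hLmeas hL0 hLconc
          (fun v _ => hLnn v) (fun v _ => hLM v) (fun v hv => hLpos v hv)
          ⟨ht₀0, ht₀a⟩ hu0 hut
        -- h2 : t₀ * (M⁻¹)^(k+1) + (k+1)*u*(B k) ≤ (k+2)*(B (k+1))
        have hid1 : t₀ * (M⁻¹)^(k+1) = 1/(((k:ℝ)+2)*A (k+1)) := by
          rw [ht₀def]
          rw [div_mul_eq_mul_div]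
          congr 1
          rw [← mul_pow, mul_inv_cancel₀ hM.ne', one_pow]
        have hid2 : ((k:ℝ)+1)*u*(B k)
            = (((k:ℝ)+1)*(((k:ℝ)+1) * (A k * B k)))/(((k:ℝ)+2)*A (k+1)) := by
          rw [hudef]
          field_simp
        have h3 : ((k:ℝ)+1)/(((k:ℝ)+2)*A (k+1)) ≤ ((k:ℝ)+1)*u*(B k) := by
          rw [hid2]
          refine (div_le_div_iff_of_pos_right hden).2 ?_
          nlinarith [ih]
        have h4 : (1 + ((k:ℝ)+1))/(((k:ℝ)+2)*A (k+1)) ≤ ((k:ℝ)+2)*(B (k+1)) := by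
          rw [show ((1:ℝ) + ((k:ℝ)+1))/(((k:ℝ)+2)*A (k+1))
            = 1/(((k:ℝ)+2)*A (k+1)) + ((k:ℝ)+1)/(((k:ℝ)+2)*A (k+1)) from (add_div 1 ((k:ℝ)+1) (((k:ℝ)+2)*A (k+1)))]
          calc 1/(((k:ℝ)+2)*A (k+1)) + ((k:ℝ)+1)/(((k:ℝ)+2)*A (k+1))
              ≤ t₀ * (M⁻¹)^(k+1) + ((k:ℝ)+1)*u*(B k) := by
                rw [hid1]; linarith [h3]
            _ ≤ ((k:ℝ)+2)*(B (k+1)) := h2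
        have h6 := mul_le_mul_of_nonneg_right h4 hAk1pos.le
        have h7 : ((1:ℝ) + (((k:ℝ))+1))/(((k:ℝ)+2)*A (k+1)) * A (k+1) = 1 := by
          rw [div_mul_eq_mul_div, div_eq_one_iff_eq hden.ne']
          ring
        rw [h7] at h6
        have hgoal : 1 ≤ ((k:ℝ)+2) * (A (k+1) * B (k+1)) := by nlinarith [h6]
        push_cast
        calc (1:ℝ) ≤ ((k:ℝ)+2) * (A (k+1) * B (k+1)) := hgoal
          _ = ((k:ℝ)+1+1) * (A (k+1) * B (k+1)) := by ring
  -- final conversions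
  have hIf : (∫ x, f x ^ (k+1)) = 2 * A (k+1) := by
    refine integral_even_decay (g := fun x => f x ^ (k+1)) (hfmeas.pow_const _) ha ?_ ?_
      (C := M^(k+1)) ?_
    · intro y
      show f (-y) ^ (k+1) = f y ^ (k+1)
      rw [heven]
    · intro y hy
      show f y ^ (k+1) = 0
      rw [hzero y (fun hmem => absurd hmem.2 (not_le.2 hy))]
      exact zero_pow (Nat.succ_ne_zero k)
    · intro y
      show |f y ^ (k+1)| ≤ M^(k+1)
      rw [abs_of_nonneg (pow_nonneg (hnonneg y) _)]
      exact pow_le_pow_left₀ (hnonneg y) (hfM y) _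
  have hIL : (∫ y, Lpolar f y ^ (k+1)) = 2 * B (k+1) := by
    refine integral_even_decay (g := fun y => Lpolar f y ^ (k+1)) (hLmeas.pow_const _)
      (by positivity : (0:ℝ) < a⁻¹) ?_ ?_ (C := (M⁻¹)^(k+1)) ?_
    · intro y
      show Lpolar f (-y) ^ (k+1) = Lpolar f y ^ (k+1)
      rw [heLf]
    · intro y hy
      show Lpolar f y ^ (k+1) = 0
      rw [hLzero y hy]
      exact zero_pow (Nat.succ_ne_zero k)
    · intro y
      show |Lpolar f y ^ (k+1)| ≤ (M⁻¹)^(k+1)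
      rw [abs_of_nonneg (pow_nonneg (hLnn y) _)]
      exact pow_le_pow_left₀ (hLnn y) (hLM y) _
  have hmain := main (k+1)
  have hPm : Pm f (k+1) = (2*A (k+1)) * (2*B (k+1)) := by rw [Pm, hIf, hIL]
  rw [hPm]
  have hcast : ((k+1 : ℕ):ℝ) + 1 = (k:ℝ)+2 := by push_cast; ring
  rw [ge_iff_le, hcast, div_le_iff₀ (by positivity : (0:ℝ) < (k:ℝ)+2)]
  push_cast at hmain
  nlinarith [hmain]
end

section
/- Let m > 0, let K ⊂ ℝ^m be a centrally symmetric convex body, and let f : ℝⁿ → (0,+∞] be an even convex function with f(tx) → +∞ as t → +∞ for every x ≠ 0. Define C^K_m(f) as the closure of {(x,s) ∈ ℝⁿ × (ℝ^m ∖ {0}) : ‖s‖_K · f(x/‖s‖_K) ≤ 1}. Then the polar body of C^K_m(f) in ℝ^{n+m} equals C^{K°}_m(Mf), the closure of {(y,t) ∈ ℝⁿ × (ℝ^m ∖ {0}) : ‖t‖_{K°} · Mf(y/‖t‖_{K°}) ≤ 1}. -/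
open MeasureTheory
open scoped ENNReal

/-- `Mf(y) = sup_{x} (1 + ⟨x,y⟩)/f(x)` for a function `f : ℝⁿ → (0, +∞]`. -/
noncomputable def MsupN (n : ℕ) (f : EuclideanSpace ℝ (Fin n) → ℝ≥0∞)
    (y : EuclideanSpace ℝ (Fin n)) : ℝ≥0∞ :=
  ⨆ x : EuclideanSpace ℝ (Fin n), ENNReal.ofReal (1 + (inner ℝ x y : ℝ)) / f x

/-- The polar set `K° = {t : ⟨s,t⟩ ≤ 1 for all s ∈ K}`. -/
def polarBody {m : ℕ} (K : Set (EuclideanSpace ℝ (Fin m))) : Set (EuclideanSpace ℝ (Fin m)) :=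
  {t | ∀ s ∈ K, (inner ℝ s t : ℝ) ≤ 1}

/-- The polar of a subset of `ℝⁿ × ℝ^m` with respect to the pairing
`⟨(x,s),(y,t)⟩ = ⟨x,y⟩ + ⟨s,t⟩`. -/
def polarPair {n m : ℕ}
    (C : Set (EuclideanSpace ℝ (Fin n) × EuclideanSpace ℝ (Fin m))) :
    Set (EuclideanSpace ℝ (Fin n) × EuclideanSpace ℝ (Fin m)) :=
  {z | ∀ w ∈ C, (inner ℝ w.1 z.1 : ℝ) + (inner ℝ w.2 z.2 : ℝ) ≤ 1}

/-- The body `C^K_m(f)`: the closure of `{(x,s) : s ≠ 0, ‖s‖_K · f(x/‖s‖_K) ≤ 1}`. -/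
noncomputable def CKm (n m : ℕ) (K : Set (EuclideanSpace ℝ (Fin m)))
    (f : EuclideanSpace ℝ (Fin n) → ℝ≥0∞) :
    Set (EuclideanSpace ℝ (Fin n) × EuclideanSpace ℝ (Fin m)) :=
  closure {p : EuclideanSpace ℝ (Fin n) × EuclideanSpace ℝ (Fin m) |
    p.2 ≠ 0 ∧ ENNReal.ofReal (gauge K p.2) * f ((gauge K p.2)⁻¹ • p.1) ≤ 1}

section Aux

variable {m : ℕ} {K : Set (EuclideanSpace ℝ (Fin m))}

lemma aux_mem_iff_gauge (hKconv : Convex ℝ K) (hKcl : IsClosed K)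
    (hK0 : (0:EuclideanSpace ℝ (Fin m)) ∈ interior K) (x : EuclideanSpace ℝ (Fin m)) :
    x ∈ K ↔ gauge K x ≤ 1 := by
  constructor
  · exact fun h => gauge_le_one_of_mem h
  · intro h; rw [← hKcl.closure_eq]
    exact mem_closure_of_gauge_le_one hKconv (interior_subset hK0)
      (absorbent_nhds_zero (mem_interior_iff_mem_nhds.mp hK0)) h

lemma aux_polar_mem_nhds (hKcomp : IsCompact K) : polarBody K ∈ nhds (0:EuclideanSpace ℝ (Fin m)) := by
  obtain ⟨R, hR0, hR⟩ : ∃ R : ℝ, 0 < R ∧ ∀ s ∈ K, ‖s‖ ≤ R := by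
    obtain ⟨R, hR⟩ := hKcomp.isBounded.exists_norm_le
    exact ⟨max R 1, lt_of_lt_of_le one_pos (le_max_right _ _),
      fun s hs => (hR s hs).trans (le_max_left _ _)⟩
  rw [Metric.mem_nhds_iff]
  refine ⟨R⁻¹, by positivity, fun t ht => ?_⟩
  intro s hs
  calc (inner ℝ s t : ℝ) ≤ ‖s‖ * ‖t‖ := real_inner_le_norm s t
    _ ≤ R * R⁻¹ := by
        apply mul_le_mul (hR s hs) _ (norm_nonneg t) hR0.le
        exact le_of_lt (by simpa [mem_ball_zero_iff] using ht)
    _ = 1 := mul_inv_cancel₀ hR0.ne'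

lemma aux_polar_bounded (hK0 : (0:EuclideanSpace ℝ (Fin m)) ∈ interior K) :
    Bornology.IsVonNBounded ℝ (polarBody K) := by
  obtain ⟨ε, hε0, hε⟩ := Metric.mem_nhds_iff.mp (mem_interior_iff_mem_nhds.mp hK0)
  apply NormedSpace.isVonNBounded_of_isBounded
  rw [Metric.isBounded_iff_subset_closedBall 0]
  refine ⟨2/ε, fun t ht => ?_⟩
  rw [Metric.mem_closedBall, dist_zero_right]
  rcases eq_or_ne t 0 with rfl | htne
  · simp; positivity
  · have hs : (ε/2) • ‖t‖⁻¹ • t ∈ K := by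
      apply hε
      rw [mem_ball_zero_iff, norm_smul, norm_smul, norm_inv, norm_norm,
        inv_mul_cancel₀ (norm_ne_zero_iff.mpr htne)]
      rw [mul_one, Real.norm_eq_abs, abs_of_pos (half_pos hε0)]
      linarith
    have := ht _ hs
    rw [real_inner_smul_left, real_inner_smul_left, real_inner_self_eq_norm_sq] at this
    have ht2 : (ε/2) * ‖t‖ ≤ 1 := by
      have : ε/2 * (‖t‖⁻¹ * (‖t‖*‖t‖)) ≤ 1 := by rw [sq] at this; linarith [this]
      rwa [inv_mul_cancel_left₀ (norm_ne_zero_iff.mpr htne)] at this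
    rw [← le_div_iff₀' (by positivity : (0:ℝ) < ε/2)] at ht2
    calc ‖t‖ ≤ 1/(ε/2) := ht2
      _ = 2/ε := by field_simp

lemma aux_polar_convex : Convex ℝ (polarBody K) := by
  intro t1 h1 t2 h2 a b ha hb hab
  intro s hs
  have e : (inner ℝ s (a • t1 + b • t2) : ℝ) = a * inner ℝ s t1 + b * inner ℝ s t2 := by
    rw [inner_add_right, real_inner_smul_right, real_inner_smul_right]
  rw [e]
  calc a * inner ℝ s t1 + b * inner ℝ s t2 ≤ a * 1 + b * 1 := by
        apply add_le_add (mul_le_mul_of_nonneg_left (h1 s hs) ha)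
          (mul_le_mul_of_nonneg_left (h2 s hs) hb)
    _ = 1 := by rw [mul_one, mul_one, hab]

lemma aux_polar_closed : IsClosed (polarBody K) := by
  have : polarBody K = ⋂ s ∈ K, {t | (inner ℝ s t : ℝ) ≤ 1} := by
    ext t; simp [polarBody, Set.mem_iInter]
  rw [this]
  exact isClosed_biInter fun s _ =>
    isClosed_le (Continuous.inner continuous_const continuous_id) continuous_const

lemma aux_polar_symm (hKsymm : ∀ s ∈ K, -s ∈ K) : ∀ t ∈ polarBody K, -t ∈ polarBody K := by
  intro t ht s hs
  have := ht (-s) (hKsymm s hs)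
  rwa [inner_neg_left, ← inner_neg_right] at this

lemma aux_polar_zero : (0:EuclideanSpace ℝ (Fin m)) ∈ polarBody K := by
  intro s _; simp

lemma aux_inner_le_gauge_polar (hKcomp : IsCompact K) {u : EuclideanSpace ℝ (Fin m)}
    (hu : u ∈ K) (t : EuclideanSpace ℝ (Fin m)) :
    (inner ℝ u t : ℝ) ≤ gauge (polarBody K) t := by
  have habs : Absorbent ℝ (polarBody K) := absorbent_nhds_zero (aux_polar_mem_nhds hKcomp)
  rw [gauge]
  apply le_csInf (habs.gauge_set_nonempty)
  rintro r ⟨hr0, hrt⟩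
  obtain ⟨t', ht', rfl⟩ := hrt
  rw [real_inner_smul_right]
  calc r * inner ℝ u t' ≤ r * 1 := mul_le_mul_of_nonneg_left (ht' u hu) hr0.le
    _ = r := mul_one r

lemma aux_gauge_pos_K (hKcomp : IsCompact K)
    (hK0 : (0:EuclideanSpace ℝ (Fin m)) ∈ interior K)
    {s : EuclideanSpace ℝ (Fin m)} (hs : s ≠ 0) : 0 < gauge K s :=
  (gauge_pos (absorbent_nhds_zero (mem_interior_iff_mem_nhds.mp hK0))
    (NormedSpace.isVonNBounded_of_isBounded _ hKcomp.isBounded)).mpr hs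

lemma aux_gauge_pos_polar (hKcomp : IsCompact K)
    (hK0 : (0:EuclideanSpace ℝ (Fin m)) ∈ interior K)
    {t : EuclideanSpace ℝ (Fin m)} (ht : t ≠ 0) : 0 < gauge (polarBody K) t :=
  (gauge_pos (absorbent_nhds_zero (aux_polar_mem_nhds hKcomp)) (aux_polar_bounded hK0)).mpr ht

lemma aux_exists_unit (hm : 0 < m) (hKconv : Convex ℝ K) (hKcomp : IsCompact K)
    (hKsymm : ∀ s ∈ K, -s ∈ K) (hK0 : (0:EuclideanSpace ℝ (Fin m)) ∈ interior K)
    (t : EuclideanSpace ℝ (Fin m)) :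
    ∃ u : EuclideanSpace ℝ (Fin m), gauge K u = 1 ∧ gauge (polarBody K) t ≤ inner ℝ u t := by
  have hK0' : (0:EuclideanSpace ℝ (Fin m)) ∈ K := interior_subset hK0
  have hmemiff := aux_mem_iff_gauge hKconv hKcomp.isClosed hK0
  -- a unit-gauge vector exists
  have hunit : ∃ u0 : EuclideanSpace ℝ (Fin m), gauge K u0 = 1 := by
    set e : EuclideanSpace ℝ (Fin m) := EuclideanSpace.single ⟨0, hm⟩ (1:ℝ) with he
    have hene : e ≠ 0 := by
      intro h
      have := congrArg (fun v : EuclideanSpace ℝ (Fin m) => v ⟨0, hm⟩) h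
      simpa [he, EuclideanSpace.single_apply] using this
    have hge : 0 < gauge K e := aux_gauge_pos_K hKcomp hK0 hene
    refine ⟨(gauge K e)⁻¹ • e, ?_⟩
    rw [gauge_smul_of_nonneg (inv_nonneg.mpr hge.le), smul_eq_mul, inv_mul_cancel₀ hge.ne']
  rcases eq_or_ne t 0 with rfl | htne
  · obtain ⟨u0, hu0⟩ := hunit
    exact ⟨u0, hu0, by simp [gauge_zero]⟩
  · -- maximize inner over compact K
    obtain ⟨u', hu'K, hu'max⟩ := hKcomp.exists_isMaxOn ⟨0, hK0'⟩
      (Continuous.inner continuous_id continuous_const).continuousOn (f := fun u => (inner ℝ u t : ℝ))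
    set h : ℝ := inner ℝ u' t with hh
    have hh0 : 0 ≤ h := by
      have := hu'max hK0'
      simpa [hh] using this
    have hhpos : 0 < h := by
      rcases hh0.lt_or_eq with h1 | h1
      · exact h1
      · exfalso
        obtain ⟨ε, hε0, hε⟩ := Metric.mem_nhds_iff.mp (mem_interior_iff_mem_nhds.mp hK0)
        have hs : (ε/2) • ‖t‖⁻¹ • t ∈ K := by
          apply hε
          rw [mem_ball_zero_iff, norm_smul, norm_smul, norm_inv, norm_norm,
            inv_mul_cancel₀ (norm_ne_zero_iff.mpr htne), mul_one, Real.norm_eq_abs,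
            abs_of_pos (half_pos hε0)]
          linarith
        have : (inner ℝ ((ε/2) • ‖t‖⁻¹ • t) t : ℝ) ≤ h := hu'max hs
        rw [real_inner_smul_left, real_inner_smul_left, real_inner_self_eq_norm_sq] at this
        have hpos : 0 < ε/2 * (‖t‖⁻¹ * ‖t‖^2) := by
          have : (0:ℝ) < ‖t‖ := norm_pos_iff.mpr htne
          positivity
        rw [← h1] at this
        linarith
    -- gauge (polar) t ≤ h
    have hρh : gauge (polarBody K) t ≤ h := by
      apply gauge_le_of_mem hh0
      refine ⟨h⁻¹ • t, ?_, by show h • _ = t; rw [smul_smul, mul_inv_cancel₀ hhpos.ne', one_smul]⟩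
      intro s hs
      rw [real_inner_smul_right]
      have : (inner ℝ s t : ℝ) ≤ h := hu'max hs
      calc h⁻¹ * inner ℝ s t ≤ h⁻¹ * h := mul_le_mul_of_nonneg_left this (inv_nonneg.mpr hh0)
        _ = 1 := inv_mul_cancel₀ hhpos.ne'
    -- normalize u'
    have hu'ne : u' ≠ 0 := by
      intro h0
      rw [h0] at hh
      simp at hh
      rw [hh] at hhpos
      exact lt_irrefl 0 hhpos
    have hgu' : 0 < gauge K u' := aux_gauge_pos_K hKcomp hK0 hu'ne
    have hgu'le : gauge K u' ≤ 1 := gauge_le_one_of_mem hu'K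
    refine ⟨(gauge K u')⁻¹ • u', ?_, ?_⟩
    · rw [gauge_smul_of_nonneg (inv_nonneg.mpr hgu'.le), smul_eq_mul, inv_mul_cancel₀ hgu'.ne']
    · rw [real_inner_smul_left, ← hh]
      calc gauge (polarBody K) t ≤ h := hρh
        _ = 1 * h := (one_mul h).symm
        _ ≤ (gauge K u')⁻¹ * h := by
            apply mul_le_mul_of_nonneg_right _ hh0
            rw [le_inv_comm₀ one_pos hgu']
            simpa using hgu'le

end Aux

section Aux2

variable {n : ℕ} {f : EuclideanSpace ℝ (Fin n) → ℝ≥0∞}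

lemma aux_f0_le (heven : ∀ x, f (-x) = f x)
    (hconv : ∀ x y : EuclideanSpace ℝ (Fin n), ∀ l : ℝ, 0 ≤ l → l ≤ 1 →
      f ((1 - l) • x + l • y) ≤ ENNReal.ofReal (1 - l) * f x + ENNReal.ofReal l * f y)
    (x : EuclideanSpace ℝ (Fin n)) : f 0 ≤ f x := by
  have h := hconv x (-x) (1/2) (by norm_num) (by norm_num)
  have e : ((1 - 1/2 : ℝ)) • x + (1/2 : ℝ) • (-x) = (0 : EuclideanSpace ℝ (Fin n)) := by
    rw [smul_neg]; norm_num
  rw [e, heven] at h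
  calc f 0 ≤ ENNReal.ofReal (1 - 1/2) * f x + ENNReal.ofReal (1/2) * f x := h
    _ = (ENNReal.ofReal (1/2) + ENNReal.ofReal (1/2)) * f x := by norm_num; ring
    _ = 1 * f x := by rw [← ENNReal.ofReal_add (by norm_num) (by norm_num)]; norm_num
    _ = f x := one_mul _

lemma aux_div_le_one {a b : ℝ≥0∞} (hb : b ≠ 0) : a / b ≤ 1 ↔ a ≤ b := by
  rw [ENNReal.div_le_iff_le_mul (Or.inl hb) (Or.inr one_ne_zero), one_mul]

lemma aux_Msup_char (hpos : ∀ x, 0 < f x) {r : ℝ} (hr : 0 < r)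
    (y : EuclideanSpace ℝ (Fin n)) :
    ENNReal.ofReal r * MsupN n f (r⁻¹ • y) ≤ 1 ↔
      ∀ z, ENNReal.ofReal (r + (inner ℝ z y : ℝ)) ≤ f z := by
  rw [MsupN, ENNReal.mul_iSup, iSup_le_iff]
  have key : ∀ z : EuclideanSpace ℝ (Fin n),
      ENNReal.ofReal r * (ENNReal.ofReal (1 + (inner ℝ z (r⁻¹ • y) : ℝ)) / f z)
        = ENNReal.ofReal (r + (inner ℝ z y : ℝ)) / f z := by
    intro z
    rw [← mul_div_assoc, ← ENNReal.ofReal_mul hr.le, real_inner_smul_right,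
      mul_add, mul_one, mul_inv_cancel_left₀ hr.ne']
  constructor
  · intro h z
    have := h z
    rw [key z] at this
    exact (aux_div_le_one (hpos z).ne').mp this
  · intro h z
    rw [key z]
    exact (aux_div_le_one (hpos z).ne').mpr (h z)

end Aux2

lemma polarPair_closure {n m : ℕ}
    (C : Set (EuclideanSpace ℝ (Fin n) × EuclideanSpace ℝ (Fin m))) :
    polarPair (closure C) = polarPair C := by
  apply Set.Subset.antisymm
  · exact fun z hz w hw => hz w (subset_closure hw)
  · intro z hz w hw
    have hcl : IsClosed {w : EuclideanSpace ℝ (Fin n) × EuclideanSpace ℝ (Fin m) |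
        (inner ℝ w.1 z.1 : ℝ) + (inner ℝ w.2 z.2 : ℝ) ≤ 1} := by
      apply isClosed_le _ continuous_const
      exact Continuous.add
        (Continuous.inner (continuous_fst) continuous_const)
        (Continuous.inner (continuous_snd) continuous_const)
    exact closure_minimal (fun w hw => hz w hw) hcl hw

lemma polarPair_isClosed {n m : ℕ}
    (C : Set (EuclideanSpace ℝ (Fin n) × EuclideanSpace ℝ (Fin m))) :
    IsClosed (polarPair C) := by
  have : polarPair C = ⋂ w ∈ C, {z : EuclideanSpace ℝ (Fin n) × EuclideanSpace ℝ (Fin m) |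
      (inner ℝ w.1 z.1 : ℝ) + (inner ℝ w.2 z.2 : ℝ) ≤ 1} := by
    ext z; simp [polarPair]
  rw [this]
  exact isClosed_biInter fun w _ => isClosed_le (Continuous.add
    (Continuous.inner continuous_const continuous_fst)
    (Continuous.inner continuous_const continuous_snd)) continuous_const


noncomputable def preCKm (n m : ℕ) (K : Set (EuclideanSpace ℝ (Fin m)))
    (f : EuclideanSpace ℝ (Fin n) → ℝ≥0∞) :
    Set (EuclideanSpace ℝ (Fin n) × EuclideanSpace ℝ (Fin m)) :=
  {p : EuclideanSpace ℝ (Fin n) × EuclideanSpace ℝ (Fin m) |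
    p.2 ≠ 0 ∧ ENNReal.ofReal (gauge K p.2) * f ((gauge K p.2)⁻¹ • p.1) ≤ 1}

lemma CKm_eq (n m : ℕ) (K : Set (EuclideanSpace ℝ (Fin m)))
    (f : EuclideanSpace ℝ (Fin n) → ℝ≥0∞) : CKm n m K f = closure (preCKm n m K f) := rfl

def Tset (n m : ℕ) (K : Set (EuclideanSpace ℝ (Fin m)))
    (f : EuclideanSpace ℝ (Fin n) → ℝ≥0∞) :
    Set (EuclideanSpace ℝ (Fin n) × EuclideanSpace ℝ (Fin m)) :=
  {p : EuclideanSpace ℝ (Fin n) × EuclideanSpace ℝ (Fin m) |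
    ∀ z, ENNReal.ofReal (gauge (polarBody K) p.2 + (inner ℝ z p.1 : ℝ)) ≤ f z}

lemma polarPair_preCKm (n m : ℕ) (hm : 0 < m)
    (K : Set (EuclideanSpace ℝ (Fin m)))
    (hKconv : Convex ℝ K) (hKcomp : IsCompact K)
    (hKsymm : ∀ s ∈ K, -s ∈ K)
    (hK0 : (0 : EuclideanSpace ℝ (Fin m)) ∈ interior K)
    (f : EuclideanSpace ℝ (Fin n) → ℝ≥0∞)
    (hpos : ∀ x, 0 < f x) :
    polarPair (preCKm n m K f) = Tset n m K f := by
  ext ⟨y, t⟩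
  constructor
  · intro hyt z
    by_cases hfz : f z = ⊤
    · rw [hfz]; exact le_top
    have hF : 0 < (f z).toReal := ENNReal.toReal_pos (hpos z).ne' hfz
    set F := (f z).toReal with hFdef
    obtain ⟨u, hu1, hut⟩ := aux_exists_unit hm hKconv hKcomp hKsymm hK0 t
    have hune : u ≠ 0 := by
      intro h; rw [h, gauge_zero] at hu1; exact one_ne_zero hu1.symm
    have hrpos : (0:ℝ) < F⁻¹ := inv_pos.mpr hF
    have hmem : ((F⁻¹ • z, F⁻¹ • u) :
        EuclideanSpace ℝ (Fin n) × EuclideanSpace ℝ (Fin m)) ∈ preCKm n m K f := by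
      refine ⟨smul_ne_zero hrpos.ne' hune, ?_⟩
      have hg : gauge K (F⁻¹ • u) = F⁻¹ := by
        rw [gauge_smul_of_nonneg hrpos.le, hu1, smul_eq_mul, mul_one]
      rw [hg, inv_inv, smul_smul, mul_inv_cancel₀ hF.ne', one_smul]
      rw [← ENNReal.ofReal_toReal hfz, ← hFdef, ← ENNReal.ofReal_mul hrpos.le,
        inv_mul_cancel₀ hF.ne']
      simp
    have hineq := hyt _ hmem
    simp only at hineq
    rw [real_inner_smul_left, real_inner_smul_left] at hineq
    have h2 : gauge (polarBody K) t + (inner ℝ z y : ℝ) ≤ F := by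
      have h3 : F⁻¹ * ((inner ℝ z y : ℝ) + inner ℝ u t) ≤ 1 := by linarith
      have h4 : (inner ℝ z y : ℝ) + inner ℝ u t ≤ F := by
        have := mul_le_mul_of_nonneg_left h3 hF.le
        rwa [← mul_assoc, mul_inv_cancel₀ hF.ne', one_mul, mul_one] at this
      linarith
    calc ENNReal.ofReal (gauge (polarBody K) t + (inner ℝ z y : ℝ))
        ≤ ENNReal.ofReal F := ENNReal.ofReal_le_ofReal h2
      _ = f z := ENNReal.ofReal_toReal hfz
  · rintro hyt ⟨x, s⟩ ⟨hsne, hle⟩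
    set r := gauge K s with hrdef
    have hr : 0 < r := aux_gauge_pos_K hKcomp hK0 hsne
    set z := r⁻¹ • x with hzdef
    have hz := hyt z
    have hmul : ENNReal.ofReal (r * (gauge (polarBody K) t + (inner ℝ z y : ℝ))) ≤ 1 := by
      rw [ENNReal.ofReal_mul hr.le]
      calc ENNReal.ofReal r * ENNReal.ofReal (gauge (polarBody K) t + (inner ℝ z y : ℝ))
          ≤ ENNReal.ofReal r * f z := mul_le_mul_right hz _
        _ ≤ 1 := hle
    have hreal : r * (gauge (polarBody K) t + (inner ℝ z y : ℝ)) ≤ 1 :=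
      ENNReal.ofReal_le_one.mp hmul
    have hst : (inner ℝ s t : ℝ) ≤ r * gauge (polarBody K) t := by
      have hsK : r⁻¹ • s ∈ K := by
        rw [aux_mem_iff_gauge hKconv hKcomp.isClosed hK0,
          gauge_smul_of_nonneg (inv_nonneg.mpr hr.le), ← hrdef, smul_eq_mul,
          inv_mul_cancel₀ hr.ne']
      have := aux_inner_le_gauge_polar hKcomp hsK t
      rw [real_inner_smul_left] at this
      have := mul_le_mul_of_nonneg_left this hr.le
      rwa [← mul_assoc, mul_inv_cancel₀ hr.ne', one_mul] at this
    have hxy : (inner ℝ x y : ℝ) = r * inner ℝ z y := by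
      rw [hzdef, real_inner_smul_left, ← mul_assoc, mul_inv_cancel₀ hr.ne', one_mul]
    show (inner ℝ x y : ℝ) + inner ℝ s t ≤ 1
    rw [hxy]
    nlinarith [hst, hreal]


lemma closure_preCKm_polar (n m : ℕ) (hm : 0 < m)
    (K : Set (EuclideanSpace ℝ (Fin m)))
    (hKconv : Convex ℝ K) (hKcomp : IsCompact K)
    (hKsymm : ∀ s ∈ K, -s ∈ K)
    (hK0 : (0 : EuclideanSpace ℝ (Fin m)) ∈ interior K)
    (f : EuclideanSpace ℝ (Fin n) → ℝ≥0∞)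
    (hpos : ∀ x, 0 < f x)
    (heven : ∀ x, f (-x) = f x)
    (hconv : ∀ x y : EuclideanSpace ℝ (Fin n), ∀ l : ℝ, 0 ≤ l → l ≤ 1 →
      f ((1 - l) • x + l • y) ≤ ENNReal.ofReal (1 - l) * f x + ENNReal.ofReal l * f y) :
    closure (preCKm n m (polarBody K) (MsupN n f)) = Tset n m K f := by
  have hTclosed : IsClosed (Tset n m K f) := by
    rw [← polarPair_preCKm n m hm K hKconv hKcomp hKsymm hK0 f hpos]
    exact polarPair_isClosed _
  apply Set.Subset.antisymm
  · apply closure_minimal _ hTclosed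
    rintro ⟨y, t⟩ ⟨htne, hle⟩
    have hρ : 0 < gauge (polarBody K) t := aux_gauge_pos_polar hKcomp hK0 htne
    exact (aux_Msup_char hpos hρ y).mp hle
  · rintro ⟨y, t⟩ hyt
    rcases eq_or_ne t 0 with rfl | htne
    swap
    · apply subset_closure
      have hρ : 0 < gauge (polarBody K) t := aux_gauge_pos_polar hKcomp hK0 htne
      exact ⟨htne, (aux_Msup_char hpos hρ y).mpr hyt⟩
    · -- t = 0 : density argument
      have hT0 : ∀ z, ENNReal.ofReal ((inner ℝ z y : ℝ)) ≤ f z := by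
        intro z; have := hyt z; rwa [gauge_zero, zero_add] at this
      set w : EuclideanSpace ℝ (Fin m) := EuclideanSpace.single ⟨0, hm⟩ (1:ℝ) with hw
      have hwne : w ≠ 0 := by
        intro h
        have := congrArg (fun v : EuclideanSpace ℝ (Fin m) => v ⟨0, hm⟩) h
        simpa [hw, EuclideanSpace.single_apply] using this
      have hρ0 : 0 < gauge (polarBody K) w := aux_gauge_pos_polar hKcomp hK0 hwne
      set ρ0 : ℝ := gauge (polarBody K) w with hρ0def
      obtain ⟨ε0, hε0pos, hε0f⟩ : ∃ ε0 : ℝ, 0 < ε0 ∧ ENNReal.ofReal ε0 ≤ f 0 := by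
        by_cases h : f 0 = ⊤
        · exact ⟨1, one_pos, by rw [h]; exact le_top⟩
        · exact ⟨(f 0).toReal, ENNReal.toReal_pos (hpos 0).ne' h,
            (ENNReal.ofReal_toReal h).le⟩
      set δ : ℕ → ℝ := fun k => 1/(k+1) with hδdef
      set τ : ℕ → ℝ := fun k => ε0 * δ k / (2*ρ0) with hτdef
      have hδpos : ∀ k, 0 < δ k := by
        intro k; have : (0:ℝ) < (k:ℝ)+1 := by positivity
        simpa [hδdef] using this
      have hδle : ∀ k, δ k ≤ 1 := by
        intro k
        rw [hδdef]
        rw [div_le_one (by positivity)]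
        simp
      have hτpos : ∀ k, 0 < τ k := by
        intro k; have := hδpos k
        rw [hτdef]
        positivity
      have hmem : ∀ k, (((1 - δ k) • y, τ k • w) :
          EuclideanSpace ℝ (Fin n) × EuclideanSpace ℝ (Fin m))
            ∈ preCKm n m (polarBody K) (MsupN n f) := by
        intro k
        refine ⟨smul_ne_zero (hτpos k).ne' hwne, ?_⟩
        have hg : gauge (polarBody K) (τ k • w) = τ k * ρ0 :=
          gauge_smul_of_nonneg (hτpos k).le w
        have hgpos : 0 < τ k * ρ0 := mul_pos (hτpos k) hρ0
        show ENNReal.ofReal (gauge (polarBody K) (τ k • w)) *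
          MsupN n f ((gauge (polarBody K) (τ k • w))⁻¹ • (1 - δ k) • y) ≤ 1
        rw [hg]
        apply (aux_Msup_char hpos hgpos ((1 - δ k) • y)).mpr
        intro z
        have hval : τ k * ρ0 = ε0 * δ k / 2 := by
          rw [hτdef]
          field_simp
        rw [real_inner_smul_right, hval]
        set c : ℝ := (inner ℝ z y : ℝ) with hc
        rcases le_or_gt (ε0/2) c with hcase | hcase
        · calc ENNReal.ofReal (ε0 * δ k / 2 + (1 - δ k) * c)
              ≤ ENNReal.ofReal c := by
                apply ENNReal.ofReal_le_ofReal
                nlinarith [hδpos k, hδle k]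
            _ ≤ f z := hT0 z
        · calc ENNReal.ofReal (ε0 * δ k / 2 + (1 - δ k) * c)
              ≤ ENNReal.ofReal ε0 := by
                apply ENNReal.ofReal_le_ofReal
                nlinarith [hδpos k, hδle k]
            _ ≤ f 0 := hε0f
            _ ≤ f z := aux_f0_le heven hconv z
      have htendδ : Filter.Tendsto δ Filter.atTop (nhds 0) := by
        rw [hδdef]
        exact tendsto_one_div_add_atTop_nhds_zero_nat
      have htend1 : Filter.Tendsto (fun k => (1 - δ k) • y) Filter.atTop (nhds y) := by
        have h1 : Filter.Tendsto (fun k => 1 - δ k) Filter.atTop (nhds 1) := by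
          have := (tendsto_const_nhds (x := (1:ℝ)) (f := Filter.atTop (α := ℕ))).sub htendδ
          simpa using this
        have := h1.smul_const y
        simpa using this
      have htend2 : Filter.Tendsto (fun k => τ k • w) Filter.atTop
          (nhds (0 : EuclideanSpace ℝ (Fin m))) := by
        have hτtend : Filter.Tendsto τ Filter.atTop (nhds 0) := by
          have : τ = fun k => (ε0 / (2*ρ0)) * δ k := by
            funext k; rw [hτdef]; ring
          rw [this]
          have h := htendδ.const_mul (ε0 / (2*ρ0))
          rw [mul_zero] at h
          exact h
        have := hτtend.smul_const w
        simpa using this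
      exact mem_closure_of_tendsto (htend1.prodMk_nhds htend2)
        (Filter.Eventually.of_forall hmem)

theorem polar_of_CKm
    (n m : ℕ) (hm : 0 < m)
    (K : Set (EuclideanSpace ℝ (Fin m)))
    (hKconv : Convex ℝ K) (hKcomp : IsCompact K)
    (hKsymm : ∀ s ∈ K, -s ∈ K)
    (hK0 : (0 : EuclideanSpace ℝ (Fin m)) ∈ interior K)
    (f : EuclideanSpace ℝ (Fin n) → ℝ≥0∞)
    (hpos : ∀ x, 0 < f x)
    (heven : ∀ x, f (-x) = f x)
    (hconv : ∀ x y : EuclideanSpace ℝ (Fin n), ∀ l : ℝ, 0 ≤ l → l ≤ 1 →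
      f ((1 - l) • x + l • y) ≤ ENNReal.ofReal (1 - l) * f x + ENNReal.ofReal l * f y)
    (htend : ∀ x : EuclideanSpace ℝ (Fin n), x ≠ 0 →
      Filter.Tendsto (fun t : ℝ => f (t • x)) Filter.atTop (nhds ⊤)) :
    polarPair (CKm n m K f) = CKm n m (polarBody K) (MsupN n f) := by
  rw [CKm_eq n m K f, polarPair_closure,
    polarPair_preCKm n m hm K hKconv hKcomp hKsymm hK0 f hpos,
    CKm_eq n m (polarBody K) (MsupN n f),
    closure_preCKm_polar n m hm K hKconv hKcomp hKsymm hK0 f hpos heven hconv]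
end
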